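/- arXiv:0809.1000 — 5 statements merged into one kernel-verified Lean document; each statement's English description precedes it below -/
import Mathlib

section
/- Let $a_1>a_2$, $b_1>b_2$ be real numbers, $T>0$, and $p_1,p_2\in(0,1)$. For $j=1,2$ and $t\in(0,1)$ define $\alpha_j(t)=(1-t)a_j+tb_j-\sqrt{4p_jTt(1-t)}$ and $\beta_j(t)=(1-t)a_j+tb_j+\sqrt{4p_jTt(1-t)}$. Then $\alpha_1(t)>\beta_2(t)$ holds for all $t\in(0,1)$ if and only if $(a_1-a_2)(b_1-b_2) > T(\sqrt{p_1}+\sqrt{p_2})^2$. -/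
open Real

/-! Put `A = a₁ - a₂`, `B = b₁ - b₂`, `c = √T (√p₁ + √p₂)`. The condition `α₁(t) > β₂(t)` reads
`2c √(t(1-t)) < (1-t)A + tB`. By AM-GM the right side is at least `2√(AB) √(t(1-t))`, with
equality at `t = A/(A+B)`, so the condition holds for all `t` exactly when `c < √(AB)`,
i.e. `c² < AB`. -/

lemma sqrt_four_mul_mul {p T : ℝ} (hp : 0 ≤ p) (hT : 0 ≤ T) (u : ℝ) :
    √(4 * p * T * u) = 2 * √p * √T * √u := by
  have h4 : √4 = 2 := by
    rw [show (4 : ℝ) = 2 ^ 2 by norm_num, sqrt_sq zero_le_two]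
  rw [sqrt_mul (by positivity), sqrt_mul (by positivity), sqrt_mul zero_le_four, h4]

lemma two_mul_sqrt_mul_sqrt_le {A B t : ℝ} (hA : 0 ≤ A) (hB : 0 ≤ B) (ht₀ : 0 ≤ t)
    (ht₁ : t ≤ 1) : 2 * √(A * B) * √(t * (1 - t)) ≤ (1 - t) * A + t * B := by
  have hsplit : √(A * B) * √(t * (1 - t)) = √((1 - t) * A) * √(t * B) := by
    rw [← sqrt_mul (by positivity), ← sqrt_mul (by nlinarith)]
    ring_nf
  calc 2 * √(A * B) * √(t * (1 - t)) = 2 * √((1 - t) * A) * √(t * B) := by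
        rw [mul_assoc, hsplit, mul_assoc]
    _ ≤ √((1 - t) * A) ^ 2 + √(t * B) ^ 2 := two_mul_le_add_sq _ _
    _ = (1 - t) * A + t * B := by
        rw [sq_sqrt (by nlinarith), sq_sqrt (by positivity)]

lemma two_mul_sqrt_mul_sqrt_eq_at_div_add {A B : ℝ} (hA : 0 < A) (hB : 0 < B) :
    2 * √(A * B) * √(A / (A + B) * (1 - A / (A + B))) =
      (1 - A / (A + B)) * A + A / (A + B) * B := by
  have hAB : 0 < A + B := add_pos hA hB
  have ht : A / (A + B) * (1 - A / (A + B)) = (√(A * B) / (A + B)) ^ 2 := by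
    rw [div_pow, sq_sqrt (by positivity)]
    field_simp
    ring
  rw [ht, sqrt_sq (by positivity), mul_assoc, mul_div_assoc', mul_self_sqrt (by positivity)]
  field_simp
  ring

theorem forall_two_mul_sqrt_lt_iff {A B c : ℝ} (hA : 0 < A) (hB : 0 < B) :
    (∀ t ∈ Set.Ioo (0 : ℝ) 1, 2 * c * √(t * (1 - t)) < (1 - t) * A + t * B) ↔
      c < √(A * B) := by
  constructor
  · intro h
    have hAB : 0 < A + B := add_pos hA hB
    have ht : A / (A + B) ∈ Set.Ioo (0 : ℝ) 1 :=
      ⟨div_pos hA hAB, (div_lt_one hAB).2 (by linarith)⟩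
    have hu : 0 < √(A / (A + B) * (1 - A / (A + B))) :=
      sqrt_pos.2 (mul_pos ht.1 (sub_pos.2 ht.2))
    have hlt := h _ ht
    rw [← two_mul_sqrt_mul_sqrt_eq_at_div_add hA hB] at hlt
    nlinarith
  · intro hc t ht
    have hu : 0 < √(t * (1 - t)) := sqrt_pos.2 (mul_pos ht.1 (sub_pos.2 ht.2))
    calc 2 * c * √(t * (1 - t)) < 2 * √(A * B) * √(t * (1 - t)) := by gcongr
      _ ≤ (1 - t) * A + t * B :=
        two_mul_sqrt_mul_sqrt_le hA.le hB.le ht.1.le ht.2.le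

theorem stmt_0 (a₁ a₂ b₁ b₂ T p₁ p₂ : ℝ)
    (ha : a₁ > a₂) (hb : b₁ > b₂) (hT : 0 < T)
    (hp₁ : p₁ ∈ Set.Ioo (0:ℝ) 1) (hp₂ : p₂ ∈ Set.Ioo (0:ℝ) 1) :
    (∀ t ∈ Set.Ioo (0:ℝ) 1,
      (1 - t) * a₁ + t * b₁ - Real.sqrt (4 * p₁ * T * t * (1 - t)) >
      (1 - t) * a₂ + t * b₂ + Real.sqrt (4 * p₂ * T * t * (1 - t))) ↔
    (a₁ - a₂) * (b₁ - b₂) > T * (Real.sqrt p₁ + Real.sqrt p₂) ^ 2 := by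
  have hpoint : ∀ t : ℝ,
      (1 - t) * a₁ + t * b₁ - √(4 * p₁ * T * t * (1 - t)) >
        (1 - t) * a₂ + t * b₂ + √(4 * p₂ * T * t * (1 - t)) ↔
      2 * (√T * (√p₁ + √p₂)) * √(t * (1 - t)) < (1 - t) * (a₁ - a₂) + t * (b₁ - b₂) := by
    intro t
    rw [mul_assoc (4 * p₁ * T), mul_assoc (4 * p₂ * T), sqrt_four_mul_mul hp₁.1.le hT.le,
      sqrt_four_mul_mul hp₂.1.le hT.le]
    constructor <;> intro h <;> linarith
  simp_rw [hpoint]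
  rw [forall_two_mul_sqrt_lt_iff (sub_pos.2 ha) (sub_pos.2 hb), lt_sqrt (by positivity),
    mul_pow, sq_sqrt hT.le]
end

section
/- Let $a_1>a_2$, $b_1>b_2$, $t\in(0,1)$, $p_1,p_2\in(0,1)$ with $(a_1-a_2)(b_1-b_2)>(\sqrt{p_1}+\sqrt{p_2})^2$ (large separation with $T=1$). Define $\alpha_j=(1-t)a_j+tb_j-\sqrt{4p_jt(1-t)}$, $\beta_j=(1-t)a_j+tb_j+\sqrt{4p_jt(1-t)}$, and $x_0=\frac{\sqrt{p_1}}{\sqrt{p_1}+\sqrt{p_2}}\cdot\frac{\alpha_2+\beta_2}{2}+\frac{\sqrt{p_2}}{\sqrt{p_1}+\sqrt{p_2}}\cdot\frac{\alpha_1+\beta_1}{2}$. Then $(\alpha_1-x_0)(\beta_1-x_0) > \frac{p_1}{(\sqrt{p_1}+\sqrt{p_2})^2}\big((1-t)(a_1-a_2)-t(b_1-b_2)\big)^2$. -/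
/-! With `cⱼ = (1-t)aⱼ + t bⱼ`, `S = √p₁ + √p₂` and `u = √(4p₁t(1-t))` we have `α₁, β₁ = c₁ ∓ u`,
and `x₀` averages the midpoints `c₂, c₁`, so `c₁ - x₀ = (√p₁/S)(c₁ - c₂)`.
Hence `(α₁ - x₀)(β₁ - x₀) = (p₁/S²) d² - u²` with `d = (1-t)(a₁-a₂) + t(b₁-b₂)`.
Since `d² - ((1-t)(a₁-a₂) - t(b₁-b₂))² = 4t(1-t)(a₁-a₂)(b₁-b₂)`, the claimed
inequality reduces to `4p₁t(1-t)((a₁-a₂)(b₁-b₂) - S²)/S² > 0`, i.e. to large separation. -/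

lemma sub_weighted_average_eq {w₁ w₂ : ℝ} (hw : w₁ + w₂ ≠ 0) (c₁ c₂ : ℝ) :
    c₁ - (w₁ / (w₁ + w₂) * c₂ + w₂ / (w₁ + w₂) * c₁) = w₁ / (w₁ + w₂) * (c₁ - c₂) := by
  field_simp
  ring

lemma mul_sq_sub_lt_mul_sq_add_sub {p t A B S : ℝ} (hp : 0 < p) (ht : t ∈ Set.Ioo (0 : ℝ) 1)
    (hS : 0 < S) (hsep : S ^ 2 < A * B) :
    p / S ^ 2 * ((1 - t) * A - t * B) ^ 2
      < p / S ^ 2 * ((1 - t) * A + t * B) ^ 2 - 4 * p * t * (1 - t) := by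
  have hgap : p / S ^ 2 * ((1 - t) * A + t * B) ^ 2 - 4 * p * t * (1 - t)
      - p / S ^ 2 * ((1 - t) * A - t * B) ^ 2
      = 4 * p * t * (1 - t) / S ^ 2 * (A * B - S ^ 2) := by
    field_simp
    ring
  have hpos : 0 < 4 * p * t * (1 - t) / S ^ 2 * (A * B - S ^ 2) := by
    have := ht.1; have := sub_pos.mpr ht.2
    exact mul_pos (by positivity) (by linarith)
  linarith

theorem stmt_3_general (a₁ a₂ b₁ b₂ t p₁ p₂ : ℝ)
    (ht : t ∈ Set.Ioo (0:ℝ) 1) (hp₁ : p₁ ∈ Set.Ioo (0:ℝ) 1)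
    (hsep : (a₁ - a₂) * (b₁ - b₂) > (Real.sqrt p₁ + Real.sqrt p₂) ^ 2)
    (α₁ β₁ α₂ β₂ x₀ : ℝ)
    (hα₁ : α₁ = (1 - t) * a₁ + t * b₁ - Real.sqrt (4 * p₁ * t * (1 - t)))
    (hβ₁ : β₁ = (1 - t) * a₁ + t * b₁ + Real.sqrt (4 * p₁ * t * (1 - t)))
    (hα₂ : α₂ = (1 - t) * a₂ + t * b₂ - Real.sqrt (4 * p₂ * t * (1 - t)))
    (hβ₂ : β₂ = (1 - t) * a₂ + t * b₂ + Real.sqrt (4 * p₂ * t * (1 - t)))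
    (hx₀ : x₀ = Real.sqrt p₁ / (Real.sqrt p₁ + Real.sqrt p₂) * ((α₂ + β₂) / 2)
        + Real.sqrt p₂ / (Real.sqrt p₁ + Real.sqrt p₂) * ((α₁ + β₁) / 2)) :
    (α₁ - x₀) * (β₁ - x₀) >
      p₁ / (Real.sqrt p₁ + Real.sqrt p₂) ^ 2 *
        ((1 - t) * (a₁ - a₂) - t * (b₁ - b₂)) ^ 2 := by
  set S := Real.sqrt p₁ + Real.sqrt p₂
  have hS : 0 < S := add_pos_of_pos_of_nonneg (Real.sqrt_pos.mpr hp₁.1) (Real.sqrt_nonneg _)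
  have hu : Real.sqrt (4 * p₁ * t * (1 - t)) ^ 2 = 4 * p₁ * t * (1 - t) :=
    Real.sq_sqrt (by have := ht.1; have := sub_pos.mpr ht.2; have := hp₁.1; positivity)
  have hcenter : (1 - t) * a₁ + t * b₁ - x₀
      = Real.sqrt p₁ / S * ((1 - t) * (a₁ - a₂) + t * (b₁ - b₂)) := by
    have hx : x₀ = Real.sqrt p₁ / S * ((1 - t) * a₂ + t * b₂)
        + Real.sqrt p₂ / S * ((1 - t) * a₁ + t * b₁) := by
      rw [hx₀, hα₁, hβ₁, hα₂, hβ₂]; ring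
    rw [hx, sub_weighted_average_eq hS.ne']; ring
  have hprod : (α₁ - x₀) * (β₁ - x₀)
      = ((1 - t) * a₁ + t * b₁ - x₀) ^ 2 - Real.sqrt (4 * p₁ * t * (1 - t)) ^ 2 := by
    rw [hα₁, hβ₁]; ring
  rw [hprod, hcenter, hu, mul_pow, div_pow, Real.sq_sqrt hp₁.1.le]
  exact mul_sq_sub_lt_mul_sq_add_sub hp₁.1 ht hS hsep

theorem stmt_3 (a₁ a₂ b₁ b₂ t p₁ p₂ : ℝ) (ha : a₁ > a₂) (hb : b₁ > b₂)
    (ht : t ∈ Set.Ioo (0:ℝ) 1) (hp₁ : p₁ ∈ Set.Ioo (0:ℝ) 1) (hp₂ : p₂ ∈ Set.Ioo (0:ℝ) 1)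
    (hsep : (a₁ - a₂) * (b₁ - b₂) > (Real.sqrt p₁ + Real.sqrt p₂) ^ 2)
    (α₁ β₁ α₂ β₂ x₀ : ℝ)
    (hα₁ : α₁ = (1 - t) * a₁ + t * b₁ - Real.sqrt (4 * p₁ * t * (1 - t)))
    (hβ₁ : β₁ = (1 - t) * a₁ + t * b₁ + Real.sqrt (4 * p₁ * t * (1 - t)))
    (hα₂ : α₂ = (1 - t) * a₂ + t * b₂ - Real.sqrt (4 * p₂ * t * (1 - t)))
    (hβ₂ : β₂ = (1 - t) * a₂ + t * b₂ + Real.sqrt (4 * p₂ * t * (1 - t)))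
    (hx₀ : x₀ = Real.sqrt p₁ / (Real.sqrt p₁ + Real.sqrt p₂) * ((α₂ + β₂) / 2)
        + Real.sqrt p₂ / (Real.sqrt p₁ + Real.sqrt p₂) * ((α₁ + β₁) / 2)) :
    (α₁ - x₀) * (β₁ - x₀) >
      p₁ / (Real.sqrt p₁ + Real.sqrt p₂) ^ 2 *
        ((1 - t) * (a₁ - a₂) - t * (b₁ - b₂)) ^ 2 :=
  stmt_3_general a₁ a₂ b₁ b₂ t p₁ p₂ ht hp₁ hsep α₁ β₁ α₂ β₂ x₀ hα₁ hβ₁ hα₂ hβ₂ hx₀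
end

section
/- Let $a_1>a_2$, $b_1>b_2$, $t\in(0,1)$, $p_1,p_2\in(0,1)$ with large separation $(a_1-a_2)(b_1-b_2)>(\sqrt{p_1}+\sqrt{p_2})^2$ and $T=1$, and let $x_0$ be as above. Then $\sqrt{(\alpha_1-x_0)(\beta_1-x_0)}+\sqrt{(x_0-\alpha_2)(x_0-\beta_2)} > |(1-t)(a_1-a_2)-t(b_1-b_2)|$. -/
/-!
Write `cⱼ = (1 - t) aⱼ + t bⱼ` for the common centre of `[αⱼ, βⱼ]`, `k = √(4t(1-t))`, so that the
half-length of `[αⱼ, βⱼ]` is `k √pⱼ`, and `S = √p₁ + √p₂`. The point `x₀` divides `[c₂, c₁]` in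
the ratio `√p₂ : √p₁`, hence `|x₀ - cⱼ| = √pⱼ (c₁ - c₂) / S` and both products under the square
roots equal `(√pⱼ / S)² E` with `E = (c₁ - c₂)² - k² S²`. The left-hand side therefore collapses
to `√E`, and `E - ((1-t)(a₁-a₂) - t(b₁-b₂))² = 4t(1-t)((a₁-a₂)(b₁-b₂) - S²) > 0`.
-/

open Real

lemma sub_eq_of_eq_weighted_average {s₁ s₂ c₁ c₂ x : ℝ} (hS : s₁ + s₂ ≠ 0)
    (hx : x = s₁ / (s₁ + s₂) * c₂ + s₂ / (s₁ + s₂) * c₁) :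
    x - c₁ = -(s₁ * (c₁ - c₂) / (s₁ + s₂)) ∧ x - c₂ = s₂ * (c₁ - c₂) / (s₁ + s₂) := by
  subst hx
  constructor <;> field_simp <;> ring

lemma sqrt_mul_sub_sub_centered {x c k s D S : ℝ} (hs : 0 ≤ s) (hS : 0 < S)
    (hx : (x - c) ^ 2 = (s * D / S) ^ 2) :
    √((x - (c - k * s)) * (x - (c + k * s))) = s / S * √(D ^ 2 - (k * S) ^ 2) := by
  have hprod : (x - (c - k * s)) * (x - (c + k * s)) = (s / S) ^ 2 * (D ^ 2 - (k * S) ^ 2) := by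
    calc (x - (c - k * s)) * (x - (c + k * s)) = (x - c) ^ 2 - (k * s) ^ 2 := by ring
      _ = (s / S) ^ 2 * (D ^ 2 - (k * S) ^ 2) := by rw [hx]; field_simp
  rw [hprod, sqrt_mul (sq_nonneg _), sqrt_sq (by positivity)]

lemma abs_sub_lt_sqrt_sq_add_sub {t u v w : ℝ} (ht : t ∈ Set.Ioo 0 1) (h : w < u * v) :
    |(1 - t) * u - t * v| < √(((1 - t) * u + t * v) ^ 2 - 4 * t * (1 - t) * w) := by
  have hgap : 0 < 4 * t * (1 - t) * (u * v - w) :=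
    mul_pos (mul_pos (mul_pos four_pos ht.1) (sub_pos.2 ht.2)) (sub_pos.2 h)
  have hdiff : ((1 - t) * u + t * v) ^ 2 - 4 * t * (1 - t) * w - ((1 - t) * u - t * v) ^ 2
      = 4 * t * (1 - t) * (u * v - w) := by ring
  rw [← sqrt_sq_eq_abs]
  exact sqrt_lt_sqrt (sq_nonneg _) (by linarith)

theorem stmt_5_general (a₁ a₂ b₁ b₂ t p₁ p₂ : ℝ)
    (ht : t ∈ Set.Ioo (0:ℝ) 1) (hp₁ : p₁ ∈ Set.Ioo (0:ℝ) 1) (hp₂ : p₂ ∈ Set.Ioo (0:ℝ) 1)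
    (hsep : (a₁ - a₂) * (b₁ - b₂) > (Real.sqrt p₁ + Real.sqrt p₂) ^ 2)
    (α₁ β₁ α₂ β₂ x₀ : ℝ)
    (hα₁ : α₁ = (1 - t) * a₁ + t * b₁ - Real.sqrt (4 * p₁ * t * (1 - t)))
    (hβ₁ : β₁ = (1 - t) * a₁ + t * b₁ + Real.sqrt (4 * p₁ * t * (1 - t)))
    (hα₂ : α₂ = (1 - t) * a₂ + t * b₂ - Real.sqrt (4 * p₂ * t * (1 - t)))
    (hβ₂ : β₂ = (1 - t) * a₂ + t * b₂ + Real.sqrt (4 * p₂ * t * (1 - t)))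
    (hx₀ : x₀ = Real.sqrt p₁ / (Real.sqrt p₁ + Real.sqrt p₂) * ((α₂ + β₂) / 2)
        + Real.sqrt p₂ / (Real.sqrt p₁ + Real.sqrt p₂) * ((α₁ + β₁) / 2)) :
    Real.sqrt ((α₁ - x₀) * (β₁ - x₀)) + Real.sqrt ((x₀ - α₂) * (x₀ - β₂)) >
      |(1 - t) * (a₁ - a₂) - t * (b₁ - b₂)| := by
  set S := √p₁ + √p₂
  have hS : 0 < S := add_pos (sqrt_pos.2 hp₁.1) (sqrt_pos.2 hp₂.1)
  have hk : 0 ≤ 4 * t * (1 - t) := mul_nonneg (by linarith [ht.1]) (by linarith [ht.2])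
  have hradius (p : ℝ) : √(4 * p * t * (1 - t)) = √(4 * t * (1 - t)) * √p := by
    rw [← sqrt_mul hk]; ring_nf
  rw [hradius] at hα₁ hβ₁ hα₂ hβ₂
  set k := √(4 * t * (1 - t)) with hk_def
  set c₁ := (1 - t) * a₁ + t * b₁
  set c₂ := (1 - t) * a₂ + t * b₂
  have hx : x₀ = √p₁ / S * c₂ + √p₂ / S * c₁ := by rw [hx₀, hα₁, hβ₁, hα₂, hβ₂]; ring
  obtain ⟨hx₁, hx₂⟩ := sub_eq_of_eq_weighted_average hS.ne' hx
  have hprod₁ : (α₁ - x₀) * (β₁ - x₀) = (x₀ - (c₁ - k * √p₁)) * (x₀ - (c₁ + k * √p₁)) := by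
    rw [hα₁, hβ₁]; ring
  rw [hprod₁, hα₂, hβ₂,
    sqrt_mul_sub_sub_centered (sqrt_nonneg p₁) hS (by rw [hx₁, neg_sq]),
    sqrt_mul_sub_sub_centered (sqrt_nonneg p₂) hS (by rw [hx₂]),
    ← add_mul, ← add_div, div_self hS.ne', one_mul, mul_pow, hk_def, sq_sqrt hk,
    show c₁ - c₂ = (1 - t) * (a₁ - a₂) + t * (b₁ - b₂) by ring]
  exact abs_sub_lt_sqrt_sq_add_sub ht hsep

theorem stmt_5 (a₁ a₂ b₁ b₂ t p₁ p₂ : ℝ) (ha : a₁ > a₂) (hb : b₁ > b₂)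
    (ht : t ∈ Set.Ioo (0:ℝ) 1) (hp₁ : p₁ ∈ Set.Ioo (0:ℝ) 1) (hp₂ : p₂ ∈ Set.Ioo (0:ℝ) 1)
    (hsep : (a₁ - a₂) * (b₁ - b₂) > (Real.sqrt p₁ + Real.sqrt p₂) ^ 2)
    (α₁ β₁ α₂ β₂ x₀ : ℝ)
    (hα₁ : α₁ = (1 - t) * a₁ + t * b₁ - Real.sqrt (4 * p₁ * t * (1 - t)))
    (hβ₁ : β₁ = (1 - t) * a₁ + t * b₁ + Real.sqrt (4 * p₁ * t * (1 - t)))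
    (hα₂ : α₂ = (1 - t) * a₂ + t * b₂ - Real.sqrt (4 * p₂ * t * (1 - t)))
    (hβ₂ : β₂ = (1 - t) * a₂ + t * b₂ + Real.sqrt (4 * p₂ * t * (1 - t)))
    (hx₀ : x₀ = Real.sqrt p₁ / (Real.sqrt p₁ + Real.sqrt p₂) * ((α₂ + β₂) / 2)
        + Real.sqrt p₂ / (Real.sqrt p₁ + Real.sqrt p₂) * ((α₁ + β₁) / 2)) :
    Real.sqrt ((α₁ - x₀) * (β₁ - x₀)) + Real.sqrt ((x₀ - α₂) * (x₀ - β₂)) >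
      |(1 - t) * (a₁ - a₂) - t * (b₁ - b₂)| :=
  stmt_5_general a₁ a₂ b₁ b₂ t p₁ p₂ ht hp₁ hp₂ hsep α₁ β₁ α₂ β₂ x₀ hα₁ hβ₁ hα₂ hβ₂ hx₀
end

section
/- Assume critical separation: $a_1>a_2$, $b_1>b_2$, $p_1^*,p_2^*\in(0,1)$ with $(a_1-a_2)(b_1-b_2)=(\sqrt{p_1^*}+\sqrt{p_2^*})^2$, and $t\in(0,1)$. Let $\alpha_j^*=(1-t)a_j+tb_j-\sqrt{4p_j^*t(1-t)}$, $\beta_j^*=(1-t)a_j+tb_j+\sqrt{4p_j^*t(1-t)}$ and $x_0^*=\frac{\sqrt{p_1^*}}{\sqrt{p_1^*}+\sqrt{p_2^*}}\cdot\frac{\alpha_2^*+\beta_2^*}{2}+\frac{\sqrt{p_2^*}}{\sqrt{p_1^*}+\sqrt{p_2^*}}\cdot\frac{\alpha_1^*+\beta_1^*}{2}$. Then $(\alpha_1^*-x_0^*)(\beta_1^*-x_0^*)=\frac{p_1^*}{(\sqrt{p_1^*}+\sqrt{p_2^*})^2}\big((1-t)(a_1-a_2)-t(b_1-b_2)\big)^2$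 and $(x_0^*-\alpha_2^*)(x_0^*-\beta_2^*)=\frac{p_2^*}{(\sqrt{p_1^*}+\sqrt{p_2^*})^2}\big((1-t)(a_1-a_2)-t(b_1-b_2)\big)^2$. -/
/-!
Write `mⱼ = (1 - t) aⱼ + t bⱼ` for the common midpoint of `[αⱼ*, βⱼ*]` and `S = √p₁ + √p₂`.
The point `x₀*` divides `[m₂, m₁]` in the ratio `√p₂ : √p₁`, so `x₀* - mⱼ = ±(√pⱼ / S)(m₁ - m₂)`,
and the product of the distances from `x₀*` to the endpoints is
`(x₀* - mⱼ)² - 4 pⱼ t (1 - t) = pⱼ / S² · ((m₁ - m₂)² - 4 t (1 - t) S²)`.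
Critical separation replaces `S²` by `(a₁ - a₂)(b₁ - b₂)`, and then
`((1 - t) A + t B)² - 4 t (1 - t) A B = ((1 - t) A - t B)²`.
-/

lemma sub_sub_sqrt_mul_sub_add_sqrt (x m c : ℝ) (hc : 0 ≤ c) :
    (x - (m - √c)) * (x - (m + √c)) = (x - m) ^ 2 - c := by
  linear_combination (-1 : ℝ) * Real.sq_sqrt hc

lemma sub_sub_sqrt_mul_sub_add_sqrt_of_sub_eq {p k S d x m : ℝ} (hp : 0 ≤ p) (hk : 0 ≤ k)
    (hS : S ≠ 0) (hx : x - m = √p / S * d) :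
    (x - (m - √(p * k))) * (x - (m + √(p * k))) = p / S ^ 2 * (d ^ 2 - k * S ^ 2) := by
  rw [sub_sub_sqrt_mul_sub_add_sqrt x m _ (mul_nonneg hp hk), hx, mul_pow, div_pow,
    Real.sq_sqrt hp]
  field_simp

theorem stmt_6_general (a₁ a₂ b₁ b₂ t p₁ p₂ : ℝ)
    (ht : t ∈ Set.Ioo (0:ℝ) 1) (hp₁ : p₁ ∈ Set.Ioo (0:ℝ) 1) (hp₂ : p₂ ∈ Set.Ioo (0:ℝ) 1)
    (hcrit : (a₁ - a₂) * (b₁ - b₂) = (Real.sqrt p₁ + Real.sqrt p₂) ^ 2)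
    (α₁ β₁ α₂ β₂ x₀ : ℝ)
    (hα₁ : α₁ = (1 - t) * a₁ + t * b₁ - Real.sqrt (4 * p₁ * t * (1 - t)))
    (hβ₁ : β₁ = (1 - t) * a₁ + t * b₁ + Real.sqrt (4 * p₁ * t * (1 - t)))
    (hα₂ : α₂ = (1 - t) * a₂ + t * b₂ - Real.sqrt (4 * p₂ * t * (1 - t)))
    (hβ₂ : β₂ = (1 - t) * a₂ + t * b₂ + Real.sqrt (4 * p₂ * t * (1 - t)))
    (hx₀ : x₀ = Real.sqrt p₁ / (Real.sqrt p₁ + Real.sqrt p₂) * ((α₂ + β₂) / 2)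
        + Real.sqrt p₂ / (Real.sqrt p₁ + Real.sqrt p₂) * ((α₁ + β₁) / 2)) :
    (α₁ - x₀) * (β₁ - x₀) =
        p₁ / (Real.sqrt p₁ + Real.sqrt p₂) ^ 2 *
          ((1 - t) * (a₁ - a₂) - t * (b₁ - b₂)) ^ 2 ∧
    (x₀ - α₂) * (x₀ - β₂) =
        p₂ / (Real.sqrt p₁ + Real.sqrt p₂) ^ 2 *
          ((1 - t) * (a₁ - a₂) - t * (b₁ - b₂)) ^ 2 := by
  set m₁ := (1 - t) * a₁ + t * b₁
  set m₂ := (1 - t) * a₂ + t * b₂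
  set S := √p₁ + √p₂
  have hS : S ≠ 0 := (add_pos_of_pos_of_nonneg (Real.sqrt_pos.2 hp₁.1) (Real.sqrt_nonneg _)).ne'
  have hk : 0 ≤ 4 * t * (1 - t) := by nlinarith [ht.1, ht.2]
  have hx₀' : x₀ = √p₁ / S * m₂ + √p₂ / S * m₁ := by rw [hx₀, hα₁, hβ₁, hα₂, hβ₂]; ring
  have hgap₁ : x₀ - m₁ = √p₁ / S * (m₂ - m₁) := by rw [hx₀']; field_simp; ring
  have hgap₂ : x₀ - m₂ = √p₂ / S * (m₁ - m₂) := by rw [hx₀']; field_simp; ring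
  have hdisc : (m₁ - m₂) ^ 2 - 4 * t * (1 - t) * S ^ 2 =
      ((1 - t) * (a₁ - a₂) - t * (b₁ - b₂)) ^ 2 := by
    rw [← hcrit]; ring
  have hr (p : ℝ) : 4 * p * t * (1 - t) = p * (4 * t * (1 - t)) := by ring
  constructor
  · calc (α₁ - x₀) * (β₁ - x₀)
        = (x₀ - (m₁ - √(p₁ * (4 * t * (1 - t))))) * (x₀ - (m₁ + √(p₁ * (4 * t * (1 - t))))) := by
          rw [hα₁, hβ₁, hr]; ring
      _ = p₁ / S ^ 2 * ((m₂ - m₁) ^ 2 - 4 * t * (1 - t) * S ^ 2) :=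
          sub_sub_sqrt_mul_sub_add_sqrt_of_sub_eq hp₁.1.le hk hS hgap₁
      _ = _ := by rw [← hdisc]; ring
  · rw [← hdisc, ← sub_sub_sqrt_mul_sub_add_sqrt_of_sub_eq hp₂.1.le hk hS hgap₂, hα₂, hβ₂, hr]

theorem stmt_6 (a₁ a₂ b₁ b₂ t p₁ p₂ : ℝ) (ha : a₁ > a₂) (hb : b₁ > b₂)
    (ht : t ∈ Set.Ioo (0:ℝ) 1) (hp₁ : p₁ ∈ Set.Ioo (0:ℝ) 1) (hp₂ : p₂ ∈ Set.Ioo (0:ℝ) 1)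
    (hcrit : (a₁ - a₂) * (b₁ - b₂) = (Real.sqrt p₁ + Real.sqrt p₂) ^ 2)
    (α₁ β₁ α₂ β₂ x₀ : ℝ)
    (hα₁ : α₁ = (1 - t) * a₁ + t * b₁ - Real.sqrt (4 * p₁ * t * (1 - t)))
    (hβ₁ : β₁ = (1 - t) * a₁ + t * b₁ + Real.sqrt (4 * p₁ * t * (1 - t)))
    (hα₂ : α₂ = (1 - t) * a₂ + t * b₂ - Real.sqrt (4 * p₂ * t * (1 - t)))
    (hβ₂ : β₂ = (1 - t) * a₂ + t * b₂ + Real.sqrt (4 * p₂ * t * (1 - t)))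
    (hx₀ : x₀ = Real.sqrt p₁ / (Real.sqrt p₁ + Real.sqrt p₂) * ((α₂ + β₂) / 2)
        + Real.sqrt p₂ / (Real.sqrt p₁ + Real.sqrt p₂) * ((α₁ + β₁) / 2)) :
    (α₁ - x₀) * (β₁ - x₀) =
        p₁ / (Real.sqrt p₁ + Real.sqrt p₂) ^ 2 *
          ((1 - t) * (a₁ - a₂) - t * (b₁ - b₂)) ^ 2 ∧
    (x₀ - α₂) * (x₀ - β₂) =
        p₂ / (Real.sqrt p₁ + Real.sqrt p₂) ^ 2 *
          ((1 - t) * (a₁ - a₂) - t * (b₁ - b₂)) ^ 2 :=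
  stmt_6_general a₁ a₂ b₁ b₂ t p₁ p₂ ht hp₁ hp₂ hcrit α₁ β₁ α₂ β₂ x₀ hα₁ hβ₁ hα₂ hβ₂ hx₀
end

section
/- Assume critical separation $(a_1-a_2)(b_1-b_2)=(\sqrt{p_1^*}+\sqrt{p_2^*})^2$ and $0<t<t_{\mathrm{crit}}=\frac{a_1-a_2}{(a_1-a_2)+(b_1-b_2)}$, so that $(1-t)(a_1-a_2)-t(b_1-b_2)>0$. With $\xi_j^*$ defined as in the paper (equation (92)), one has $\xi_4^*(x_0^*)-\xi_1^*(x_0^*) = \frac{1}{2t(1-t)}\big((1-t)(a_1-a_2)-t(b_1-b_2)\big)\cdot\frac{2\sqrt{p_1^*}}{\sqrt{p_1^*}+\sqrt{p_2^*}} > 0$. -/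
/-!
Write `sⱼ = √pⱼ`, `S = s₁ + s₂`, `cⱼ = (1-t)aⱼ + tbⱼ`, so that `αⱼ, βⱼ = cⱼ ∓ 2sⱼ√(t(1-t))`,
and let `d = c₁ - c₂ = (1-t)(a₁-a₂) + t(b₁-b₂)`, `D = (1-t)(a₁-a₂) - t(b₁-b₂)`.
The point `x₀` divides `[c₂, c₁]` in the ratio `s₂ : s₁`, so both radicands have the form
`(sⱼd/S)² - 4sⱼ²t(1-t) = (sⱼ/S)² (d² - 4t(1-t)S²)`. Critical separation `(a₁-a₂)(b₁-b₂) = S²`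
turns `d² - 4t(1-t)S²` into `D²`, and `D > 0` for `t < t_crit`, so the square roots are
`sⱼD/S` and the difference of the two branch values is `(D + (s₁ - s₂)D/S) / (2t(1-t))`,
which is `2s₁D/S / (2t(1-t))`.
-/

lemma sub_pos_of_lt_div_add {A B t : ℝ} (hAB : 0 < A + B) (ht : t < A / (A + B)) :
    0 < (1 - t) * A - t * B := by
  rw [lt_div_iff₀ hAB] at ht
  linarith

lemma sq_add_sub_eq_sq_sub_of_mul_eq_sq {A B S : ℝ} (t : ℝ) (h : A * B = S ^ 2) :
    ((1 - t) * A + t * B) ^ 2 - 4 * t * (1 - t) * S ^ 2 = ((1 - t) * A - t * B) ^ 2 := by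
  rw [← h]
  ring

lemma sqrt_sub_mul_sub_eq {p t c x d D S α β : ℝ} (hp : 0 ≤ p) (ht₀ : 0 ≤ t) (ht₁ : t ≤ 1)
    (hS : 0 < S) (hD : 0 ≤ D) (hdisc : d ^ 2 - 4 * t * (1 - t) * S ^ 2 = D ^ 2)
    (hα : α = c - √(4 * p * t * (1 - t))) (hβ : β = c + √(4 * p * t * (1 - t)))
    (hx : (x - c) ^ 2 = (√p * d / S) ^ 2) :
    √((x - α) * (x - β)) = √p * D / S := by
  have h1t : 0 ≤ 1 - t := by linarith
  rw [hα, hβ, show ∀ r, (x - (c - r)) * (x - (c + r)) = (x - c) ^ 2 - r ^ 2 by intro; ring,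
    hx, Real.sq_sqrt (by positivity), ← Real.sqrt_sq (by positivity : 0 ≤ √p * D / S)]
  congr 1
  rw [div_pow, div_pow, mul_pow, mul_pow, Real.sq_sqrt hp, ← hdisc]
  field_simp

theorem stmt_8 (a₁ a₂ b₁ b₂ t p₁ p₂ : ℝ) (ha : a₁ > a₂) (hb : b₁ > b₂)
    (ht : t ∈ Set.Ioo (0:ℝ) 1) (hp₁ : p₁ ∈ Set.Ioo (0:ℝ) 1) (hp₂ : p₂ ∈ Set.Ioo (0:ℝ) 1)
    (hcrit : (a₁ - a₂) * (b₁ - b₂) = (Real.sqrt p₁ + Real.sqrt p₂) ^ 2)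
    (htcrit : t < (a₁ - a₂) / ((a₁ - a₂) + (b₁ - b₂)))
    (α₁ β₁ α₂ β₂ x₀ : ℝ)
    (hα₁ : α₁ = (1 - t) * a₁ + t * b₁ - Real.sqrt (4 * p₁ * t * (1 - t)))
    (hβ₁ : β₁ = (1 - t) * a₁ + t * b₁ + Real.sqrt (4 * p₁ * t * (1 - t)))
    (hα₂ : α₂ = (1 - t) * a₂ + t * b₂ - Real.sqrt (4 * p₂ * t * (1 - t)))
    (hβ₂ : β₂ = (1 - t) * a₂ + t * b₂ + Real.sqrt (4 * p₂ * t * (1 - t)))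
    (hx₀ : x₀ = Real.sqrt p₁ / (Real.sqrt p₁ + Real.sqrt p₂) * ((α₂ + β₂) / 2)
        + Real.sqrt p₂ / (Real.sqrt p₁ + Real.sqrt p₂) * ((α₁ + β₁) / 2)) :
    0 < (1 - t) * (a₁ - a₂) - t * (b₁ - b₂) ∧
    (1 / (2 * t * (1 - t))) *
        (-(1 - t) * a₂ + t * b₂ - Real.sqrt ((x₀ - α₂) * (x₀ - β₂))) -
      (1 / (2 * t * (1 - t))) *
        (-(1 - t) * a₁ + t * b₁ - Real.sqrt ((α₁ - x₀) * (β₁ - x₀))) =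
      (1 / (2 * t * (1 - t))) * ((1 - t) * (a₁ - a₂) - t * (b₁ - b₂)) *
        (2 * Real.sqrt p₁ / (Real.sqrt p₁ + Real.sqrt p₂)) ∧
    0 < (1 / (2 * t * (1 - t))) * ((1 - t) * (a₁ - a₂) - t * (b₁ - b₂)) *
        (2 * Real.sqrt p₁ / (Real.sqrt p₁ + Real.sqrt p₂)) := by
  obtain ⟨ht₀, ht₁⟩ := ht
  have hs₁ : 0 < √p₁ := Real.sqrt_pos.mpr hp₁.1
  have hS : 0 < √p₁ + √p₂ := add_pos hs₁ (Real.sqrt_pos.mpr hp₂.1)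
  have hD := sub_pos_of_lt_div_add (by linarith) htcrit
  have hdisc := sq_add_sub_eq_sq_sub_of_mul_eq_sq t hcrit
  set d := (1 - t) * (a₁ - a₂) + t * (b₁ - b₂)
  have hx₁ : (x₀ - ((1 - t) * a₁ + t * b₁)) ^ 2 = (√p₁ * d / (√p₁ + √p₂)) ^ 2 := by
    rw [hx₀, hα₁, hβ₁, hα₂, hβ₂]
    field_simp
    ring
  have hx₂ : (x₀ - ((1 - t) * a₂ + t * b₂)) ^ 2 = (√p₂ * d / (√p₁ + √p₂)) ^ 2 := by
    rw [hx₀, hα₁, hβ₁, hα₂, hβ₂]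
    field_simp
    ring
  have hroot₁ := sqrt_sub_mul_sub_eq hp₁.1.le ht₀.le ht₁.le hS hD.le hdisc hα₁ hβ₁ hx₁
  have hroot₂ := sqrt_sub_mul_sub_eq hp₂.1.le ht₀.le ht₁.le hS hD.le hdisc hα₂ hβ₂ hx₂
  rw [show (α₁ - x₀) * (β₁ - x₀) = (x₀ - α₁) * (x₀ - β₁) by ring, hroot₁, hroot₂]
  refine ⟨hD, ?_, by positivity⟩
  field_simp
  ring
end
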